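/- Let ψ : E → [0,∞) be continuous and suppose the sub-level sets of α are pre-compact subsets of P_ψ(E). If f : E → ℝ is upper semicontinuous and f ≤ c(1+ψ) pointwise for some c ≥ 0, then ρ(f) = lim_{m→∞} ρ(f ∨ (−m)) = inf_{m > 0} ρ(f ∨ (−m)). -/

import Mathlib

open MeasureTheory ProbabilityTheory Filter Topology Set
open scoped ENNReal NNReal

noncomputable section

namespace SanovDual

attribute [local instance] Classical.propDecidable

/-- The integral of an `EReal`-valued function, with the convention `∞ - ∞ := -∞`. -/
def erealIntegral {X : Type*} [MeasurableSpace X] (μ : Measure X) (f : X → EReal) : EReal :=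
  if (∫⁻ x, (if f x = ⊥ then ⊤ else ENNReal.ofReal (-(f x).toReal)) ∂μ) = ⊤ then ⊥
  else ((∫⁻ x, (if f x = ⊤ then ⊤ else ENNReal.ofReal ((f x).toReal)) ∂μ : ℝ≥0∞) : EReal)
      - ((∫⁻ x, (if f x = ⊥ then ⊤ else ENNReal.ofReal (-(f x).toReal)) ∂μ : ℝ≥0∞) : EReal)

/-- Extension of a function on probability measures to all measures (value `∞` elsewhere). -/
def extend {E : Type*} [MeasurableSpace E] (α : ProbabilityMeasure E → EReal)
    (μ : Measure E) : EReal :=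
  if h : IsProbabilityMeasure μ then α ⟨μ, h⟩ else ⊤

/-- The conditional law of the `k`-th coordinate given the first `k` coordinates (`0`-indexed:
given coordinates `0, …, k-1`), under a probability measure on `Fin n → E`. -/
def condLaw {E : Type*} [MeasurableSpace E] [TopologicalSpace E] [PolishSpace E] [BorelSpace E]
    [Nonempty E] (n : ℕ) (ν : ProbabilityMeasure (Fin n → E)) (k : Fin n) :
    Kernel (Fin (k : ℕ) → E) E :=
  Measure.condKernel ((ν : Measure (Fin n → E)).map
      (fun x => ((fun i : Fin (k : ℕ) => x (Fin.castLE k.isLt.le i)), x k)))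

/-- The functional `α_n` on `P(E^n)` built from `α` by summing `α` applied to the successive
conditional laws in the disintegration. -/
def alphan {E : Type*} [MeasurableSpace E] [TopologicalSpace E] [PolishSpace E] [BorelSpace E]
    [Nonempty E] (α : ProbabilityMeasure E → EReal) (n : ℕ)
    (ν : ProbabilityMeasure (Fin n → E)) : EReal :=
  ∑ k : Fin n, erealIntegral (ν : Measure (Fin n → E))
    (fun x => extend α (condLaw n ν k (fun i => x (Fin.castLE k.isLt.le i))))

/-- The convex conjugate `ρ_n` of `α_n`, acting on (extended-real-valued) functions on `E^n`. -/
def rhon {E : Type*} [MeasurableSpace E] [TopologicalSpace E] [PolishSpace E] [BorelSpace E]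
    [Nonempty E] (α : ProbabilityMeasure E → EReal) (n : ℕ) (f : (Fin n → E) → EReal) : EReal :=
  ⨆ ν : ProbabilityMeasure (Fin n → E), erealIntegral (ν : Measure (Fin n → E)) f - alphan α n ν

/-- `ρ = ρ₁` on bounded (real-valued) functions. -/
def rho {E : Type*} [MeasurableSpace E] (α : ProbabilityMeasure E → EReal) (f : E → ℝ) : EReal :=
  ⨆ ν : ProbabilityMeasure E, ((∫ x, f x ∂(ν : Measure E) : ℝ) : EReal) - α ν

/-- `ρ` on extended-real-valued functions, with the convention `∞ - ∞ := -∞` for integrals. -/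
def rhoE {E : Type*} [MeasurableSpace E] (α : ProbabilityMeasure E → EReal) (f : E → EReal) :
    EReal :=
  ⨆ ν : ProbabilityMeasure E, erealIntegral (ν : Measure E) f - α ν

/-- `ρ` on `[0,∞]`-valued functions. -/
def rhoNN {E : Type*} [MeasurableSpace E] (α : ProbabilityMeasure E → EReal) (g : E → ℝ≥0∞) :
    EReal :=
  ⨆ ν : ProbabilityMeasure E, ((∫⁻ x, g x ∂(ν : Measure E) : ℝ≥0∞) : EReal) - α ν

/-- The empirical measure `L_n(x) = n⁻¹ ∑ δ_{x_i}` as a measure. -/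
def empMeasure {E : Type*} [MeasurableSpace E] (n : ℕ) (x : Fin n → E) : Measure E :=
  (n : ℝ≥0∞)⁻¹ • ∑ i : Fin n, Measure.dirac (x i)

/-- The empirical measure `L_n(x)` as a probability measure (junk value for `n = 0`). -/
def empirical {E : Type*} [MeasurableSpace E] [Nonempty E] (n : ℕ) (x : Fin n → E) :
    ProbabilityMeasure E :=
  if h : IsProbabilityMeasure (empMeasure n x) then ⟨empMeasure n x, h⟩
  else ⟨Measure.dirac (Classical.arbitrary E), inferInstance⟩

/-- `P_ψ(E)`, the probability measures integrating `ψ`. -/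
def Pw (E : Type*) [MeasurableSpace E] (ψ : E → ℝ) : Type _ :=
  {ν : ProbabilityMeasure E // ∫⁻ x, ENNReal.ofReal (ψ x) ∂(ν : Measure E) ≠ ⊤}

/-- The underlying probability measure of an element of `P_ψ(E)`. -/
def Pw.toProb {E : Type*} [MeasurableSpace E] {ψ : E → ℝ} (ν : Pw E ψ) :
    ProbabilityMeasure E :=
  Subtype.val ν

/-- The `ψ`-weak topology on `P_ψ(E)`: the topology generated by the maps `ν ↦ ∫ f dν` over
continuous `f : E → ℝ` with `|f| ≤ 1 + ψ`. -/
instance {E : Type*} [MeasurableSpace E] [TopologicalSpace E] (ψ : E → ℝ) :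
    TopologicalSpace (Pw E ψ) :=
  ⨅ (f : E → ℝ) (_ : Continuous f) (_ : ∀ x, |f x| ≤ 1 + ψ x),
    TopologicalSpace.induced (fun ν : Pw E ψ => ∫ x, f x ∂(ν.toProb : Measure E)) inferInstance

/-- Lift a function on `P_ψ(E)` to one on `P(E)` (junk value `⊤` off `P_ψ(E)`). -/
def liftPw {E : Type*} [MeasurableSpace E] (ψ : E → ℝ) (F : Pw E ψ → EReal)
    (ν : ProbabilityMeasure E) : EReal :=
  if h : ∫⁻ x, ENNReal.ofReal (ψ x) ∂(ν : Measure E) ≠ ⊤ then F ⟨ν, h⟩ else ⊤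

/-- The canonical map `EReal → ℝ≥0∞`. -/
def erealToENNReal (x : EReal) : ℝ≥0∞ :=
  if x = ⊤ then ⊤ else ENNReal.ofReal x.toReal

instance {E : Type*} [MeasurableSpace E] : MeasurableSpace (ProbabilityMeasure E) :=
  Subtype.instMeasurableSpace


/-!
Only `inf_m ρ(f ∨ -m) ≤ ρ(f)` needs an argument. Convexity of `α` together with the uniform
integrability of `ψ` on the relatively compact sub-level sets of `α` in `P_ψ(E)` bounds
`(c + 1) ∫ ψ dν - α(ν)` from above, so for `r < inf_m ρ(f ∨ -m)` all near-maximizers `ν` of the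
truncations, `α(ν) ≤ ∫ f ∨ -m dν - r`, lie in one sub-level set of `α`. On `P_ψ(E)` the map
`ν ↦ ∫ g dν` is upper semicontinuous for upper semicontinuous `g ≤ c(1 + ψ)` (approximate `g`
from above by Lipschitz sup-convolutions) and `α` is lower semicontinuous, so these constraint
sets are closed and decrease in `m`; by compactness they share a point `ν`, and monotone
convergence in `m` gives `r ≤ ∫ f dν - α(ν) ≤ ρ(f)`.
-/

section Semicontinuity

variable {X : Type*} [TopologicalSpace X]

theorem lowerSemicontinuous_of_isClosed_sublevel {u : X → EReal}
    (hu : ∀ c : ℝ, IsClosed {x | u x ≤ c}) : LowerSemicontinuous u := by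
  intro x y hy
  obtain ⟨q, hyq, hqx⟩ := EReal.exists_between_coe_real hy
  filter_upwards [(hu q).isOpen_compl.mem_nhds (not_le.2 hqx)] with x' hx'
  exact hyq.trans (not_le.1 hx')

theorem isClosed_setOf_le_of_lowerSemicontinuous_of_upperSemicontinuous {u : X → EReal}
    {v : X → ℝ} (hu : LowerSemicontinuous u) (hv : UpperSemicontinuous v) :
    IsClosed {x | u x ≤ v x} := by
  refine isOpen_compl_iff.1 <| isOpen_iff_mem_nhds.2 fun x hx => ?_
  obtain ⟨q, hvq, hqu⟩ := EReal.exists_between_coe_real (not_le.1 hx)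
  filter_upwards [hv x q (EReal.coe_lt_coe_iff.1 hvq), hu x q hqu] with x' hv' hu'
  exact not_le.2 ((EReal.coe_lt_coe_iff.2 hv').trans hu')

theorem exists_coe_le_of_lowerSemicontinuous {u : X → EReal} (hu : LowerSemicontinuous u)
    (hbot : ∀ x, u x ≠ ⊥) (hcompact : ∀ c : ℝ, IsCompact {x | u x ≤ c})
    (hproper : ∃ x, u x ≠ ⊤) : ∃ b : ℝ, ∀ x, (b : EReal) ≤ u x := by
  obtain ⟨x₀, hx₀⟩ := hproper
  set a₀ := (u x₀).toReal
  have hx₀a : u x₀ = a₀ := (EReal.coe_toReal hx₀ (hbot x₀)).symm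
  obtain ⟨xm, hxm, hmin⟩ := LowerSemicontinuousOn.exists_isMinOn ⟨x₀, hx₀a.le⟩
    (hcompact a₀) (hu.lowerSemicontinuousOn _)
  refine ⟨(u xm).toReal, fun x => ?_⟩
  have hxm_top : u xm ≠ ⊤ := ne_top_of_le_ne_top (EReal.coe_ne_top a₀) hxm
  rw [EReal.coe_toReal hxm_top (hbot xm)]
  by_cases hx : u x ≤ a₀
  · exact isMinOn_iff.1 hmin x hx
  · exact hxm.trans (not_le.1 hx).le

end Semicontinuity

section SupConvolution

variable {X : Type*} [PseudoMetricSpace X] {g : X → ℝ} {R : ℝ}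

def supConv (g : X → ℝ) (n : ℕ) (x : X) : ℝ := ⨆ y, g y - n * dist x y

theorem bddAbove_range_sub_mul_dist (hR : ∀ y, g y ≤ R) (n : ℕ) (x : X) :
    BddAbove (range fun y => g y - n * dist x y) :=
  ⟨R, forall_mem_range.2 fun y => by nlinarith [hR y, dist_nonneg (x := x) (y := y)]⟩

theorem le_supConv (hR : ∀ y, g y ≤ R) (n : ℕ) (x : X) : g x ≤ supConv g n x := by
  simpa [supConv] using le_ciSup (bddAbove_range_sub_mul_dist hR n x) x

theorem supConv_le [Nonempty X] (hR : ∀ y, g y ≤ R) (n : ℕ) (x : X) : supConv g n x ≤ R :=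
  ciSup_le fun y => by nlinarith [hR y, dist_nonneg (x := x) (y := y)]

theorem lipschitzWith_supConv [Nonempty X] (hR : ∀ y, g y ≤ R) (n : ℕ) :
    LipschitzWith n (supConv g n) := by
  have key : ∀ x z, supConv g n x ≤ supConv g n z + n * dist x z := fun x z =>
    ciSup_le fun y => by
      have : g y - n * dist z y ≤ supConv g n z :=
        le_ciSup (bddAbove_range_sub_mul_dist hR n z) y
      nlinarith [dist_triangle z x y, dist_comm x z, (Nat.cast_nonneg n : (0 : ℝ) ≤ n)]
  exact LipschitzWith.of_le_add_mul n key

theorem tendsto_supConv [Nonempty X] (hg : UpperSemicontinuous g) (hR : ∀ y, g y ≤ R) (x : X) :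
    Tendsto (fun n => supConv g n x) atTop (𝓝 (g x)) := by
  refine tendsto_order.2 ⟨fun y hy => .of_forall fun n => hy.trans_le (le_supConv hR n x),
    fun y hy => ?_⟩
  obtain ⟨ε, hε, hεy⟩ : ∃ ε > 0, g x + 2 * ε < y := ⟨(y - g x) / 4, by linarith, by linarith⟩
  obtain ⟨δ, hδ, hball⟩ := Metric.eventually_nhds_iff.1 (hg x (g x + ε) (by linarith))
  obtain ⟨N, hN⟩ := exists_nat_ge ((R - g x) / δ)
  filter_upwards [eventually_ge_atTop N] with n hn
  refine (ciSup_le fun z => ?_).trans_lt (show g x + ε < y by linarith)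
  rcases lt_or_ge (dist z x) δ with hz | hz
  · nlinarith [hball hz, dist_nonneg (x := x) (y := z), (Nat.cast_nonneg n : (0 : ℝ) ≤ n)]
  · have hNδ : R - g x ≤ n * δ := by
      rw [div_le_iff₀ hδ] at hN
      nlinarith [(Nat.cast_le (α := ℝ)).2 hn]
    nlinarith [hR z, dist_comm x z, (Nat.cast_nonneg n : (0 : ℝ) ≤ n)]

end SupConvolution

theorem UpperSemicontinuous.exists_seq_continuous_tendsto {X : Type*}
    [TopologicalSpace X] [TopologicalSpace.PseudoMetrizableSpace X] [Nonempty X] {g : X → ℝ}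
    (hg : UpperSemicontinuous g) {R : ℝ} (hR : ∀ x, g x ≤ R) :
    ∃ h : ℕ → X → ℝ, (∀ n, Continuous (h n)) ∧ (∀ n x, g x ≤ h n x) ∧ (∀ n x, h n x ≤ R) ∧
      ∀ x, Tendsto (fun n => h n x) atTop (𝓝 (g x)) := by
  let := TopologicalSpace.pseudoMetrizableSpacePseudoMetric X
  exact ⟨supConv g, fun n => (lipschitzWith_supConv hR n).continuous, le_supConv hR,
    supConv_le hR, tendsto_supConv hg hR⟩

theorem abs_le_mul_one_add_of_le_of_le {a K p u : ℝ} (hp : 0 ≤ p) (ha : a ≤ u)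
    (hK : u ≤ K * (1 + p)) : |u| ≤ (|a| + |K|) * (1 + p) := by
  have h1 : |K| * (1 + p) ≤ (|a| + |K|) * (1 + p) := by nlinarith [abs_nonneg a]
  have h2 : |a| ≤ (|a| + |K|) * (1 + p) := by nlinarith [abs_nonneg a, abs_nonneg K]
  rw [abs_le]
  constructor <;> nlinarith [neg_abs_le a, le_abs_self K, neg_abs_le K]

section Integrals

variable {X : Type*} [MeasurableSpace X] {μ : Measure X}

theorem integrable_of_le_of_le_mul_one_add [IsFiniteMeasure μ] {ψ g : X → ℝ}
    (hψ : Integrable ψ μ) (hg : AEStronglyMeasurable g μ)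
    {a K : ℝ} (ha : ∀ x, a ≤ g x) (hK : ∀ x, g x ≤ K * (1 + ψ x)) : Integrable g μ :=
  integrable_of_le_of_le hg (ae_of_all _ ha) (ae_of_all _ hK) (integrable_const a)
    (((integrable_const 1).add hψ).const_mul K)

theorem erealIntegral_coe_of_integrable {g : X → ℝ} (hg : Integrable g μ) :
    erealIntegral μ (fun x => (g x : EReal)) = ((∫ x, g x ∂μ : ℝ) : EReal) := by
  have hpos : ∫⁻ x, ENNReal.ofReal (g x) ∂μ ≠ ⊤ :=
    ((lintegral_ofReal_le_lintegral_enorm g).trans_lt hg.2).ne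
  have hneg : ∫⁻ x, ENNReal.ofReal (-g x) ∂μ ≠ ⊤ :=
    ((lintegral_ofReal_le_lintegral_enorm (-g)).trans_lt hg.neg.2).ne
  simp only [erealIntegral, EReal.coe_ne_bot, EReal.coe_ne_top, if_false, EReal.toReal_coe,
    hneg]
  rw [← EReal.coe_ennreal_toReal hpos, ← EReal.coe_ennreal_toReal hneg, ← EReal.coe_sub,
    integral_eq_lintegral_pos_part_sub_lintegral_neg_part hg]

theorem erealIntegral_coe_mono {g₁ g₂ : X → ℝ} (h : ∀ x, g₁ x ≤ g₂ x) :
    erealIntegral μ (fun x => (g₁ x : EReal)) ≤ erealIntegral μ (fun x => (g₂ x : EReal)) := by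
  have hneg : ∫⁻ x, ENNReal.ofReal (-g₂ x) ∂μ ≤ ∫⁻ x, ENNReal.ofReal (-g₁ x) ∂μ :=
    lintegral_mono fun x => ENNReal.ofReal_le_ofReal (neg_le_neg (h x))
  have hpos : ∫⁻ x, ENNReal.ofReal (g₁ x) ∂μ ≤ ∫⁻ x, ENNReal.ofReal (g₂ x) ∂μ :=
    lintegral_mono fun x => ENNReal.ofReal_le_ofReal (h x)
  simp only [erealIntegral, EReal.coe_ne_bot, EReal.coe_ne_top, if_false, EReal.toReal_coe]
  by_cases h₁ : ∫⁻ x, ENNReal.ofReal (-g₁ x) ∂μ = ⊤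
  · rw [if_pos h₁]
    exact bot_le
  have h₂ : ∫⁻ x, ENNReal.ofReal (-g₂ x) ∂μ ≠ ⊤ := ne_top_of_le_ne_top h₁ hneg
  rw [if_neg h₁, if_neg h₂]
  exact EReal.sub_le_sub (EReal.coe_ennreal_le_coe_ennreal_iff.2 hpos)
      (EReal.coe_ennreal_le_coe_ennreal_iff.2 hneg)

theorem integrable_of_lintegral_ofReal_ne_top {ψ : X → ℝ} (hψm : AEStronglyMeasurable ψ μ)
    (hψ0 : ∀ x, 0 ≤ ψ x) (hψ : ∫⁻ x, ENNReal.ofReal (ψ x) ∂μ ≠ ⊤) : Integrable ψ μ :=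
  ⟨hψm, (hasFiniteIntegral_iff_ofReal (ae_of_all _ hψ0)).2 hψ.lt_top⟩

theorem sub_le_integral_max_sub_zero [IsProbabilityMeasure μ] {ψ : X → ℝ} (hψ : Integrable ψ μ)
    (R : ℝ) : ∫ x, ψ x ∂μ - R ≤ ∫ x, max (ψ x - R) 0 ∂μ := by
  calc ∫ x, ψ x ∂μ - R = ∫ x, (ψ x - R) ∂μ := by simp [integral_sub hψ (integrable_const R)]
    _ ≤ _ := integral_mono (hψ.sub (integrable_const R)) (hψ.sub (integrable_const R)).pos_part
        fun x => le_max_left _ _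

theorem integrable_and_le_integral_of_antitone_of_tendsto {g : ℕ → X → ℝ} {f : X → ℝ}
    (hg : ∀ n, Integrable (g n) μ) (hanti : ∀ x, Antitone fun n => g n x)
    (hlim : ∀ x, Tendsto (fun n => g n x) atTop (𝓝 (f x))) {C : ℝ}
    (hC : ∀ n, C ≤ ∫ x, g n x ∂μ) : Integrable f μ ∧ C ≤ ∫ x, f x ∂μ := by
  have hdefect : ∀ n, ∫⁻ x, ENNReal.ofReal (g 0 x - g n x) ∂μ
      ≤ ENNReal.ofReal (∫ x, g 0 x ∂μ - C) := fun n => by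
    rw [← ofReal_integral_eq_lintegral_ofReal (f := fun x => g 0 x - g n x) ((hg 0).sub (hg n))
      (ae_of_all _ fun x => sub_nonneg.2 (hanti x (Nat.zero_le n))), integral_sub (hg 0) (hg n)]
    exact ENNReal.ofReal_le_ofReal (by linarith [hC n])
  have hfm : AEStronglyMeasurable f μ :=
    aestronglyMeasurable_of_tendsto_ae _ (fun n => (hg n).1) (ae_of_all _ hlim)
  have hlimit : ∫⁻ x, ENNReal.ofReal (g 0 x - f x) ∂μ ≠ ⊤ := by
    refine ne_top_of_le_ne_top ENNReal.ofReal_ne_top (le_of_tendsto' (x := atTop) ?_ hdefect)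
    refine lintegral_tendsto_of_tendsto_of_monotone
      (fun n => ((hg 0).sub (hg n)).aemeasurable.ennreal_ofReal) (ae_of_all _ fun x m n hmn => ?_)
      (ae_of_all _ fun x => ?_)
    · exact ENNReal.ofReal_le_ofReal (sub_le_sub_left (hanti x hmn) _)
    · exact (ENNReal.continuous_ofReal.tendsto _).comp ((hlim x).const_sub _)
  have hf : Integrable f μ := by
    have := integrable_of_lintegral_ofReal_ne_top ((hg 0).1.sub hfm)
      (fun x => sub_nonneg.2 (le_of_tendsto' (hlim x) fun n => hanti x (Nat.zero_le n))) hlimit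
    simpa using (hg 0).sub this
  exact ⟨hf, ge_of_tendsto' (integral_tendsto_of_tendsto_of_antitone hg hf
    (ae_of_all _ hanti) (ae_of_all _ hlim)) hC⟩

end Integrals

section PwTopology

variable {E : Type*} [MeasurableSpace E] [TopologicalSpace E] {ψ : E → ℝ}

theorem Pw.integrable_psi [OpensMeasurableSpace E] (hψc : Continuous ψ) (hψ0 : ∀ x, 0 ≤ ψ x)
    (ν : Pw E ψ) : Integrable ψ (ν.toProb : Measure E) :=
  integrable_of_lintegral_ofReal_ne_top hψc.aestronglyMeasurable hψ0 ν.2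

theorem Pw.continuous_integral (hψ0 : ∀ x, 0 ≤ ψ x) {h : E → ℝ} (hh : Continuous h) {K : ℝ}
    (hb : ∀ x, |h x| ≤ K * (1 + ψ x)) :
    Continuous fun ν : Pw E ψ => ∫ x, h x ∂(ν.toProb : Measure E) := by
  have hK : 0 < |K| + 1 := by positivity
  have hscaled : Continuous fun ν : Pw E ψ => ∫ x, h x / (|K| + 1) ∂(ν.toProb : Measure E) := by
    refine continuous_iff_le_induced.2 <|
      iInf_le_of_le _ <| iInf_le_of_le (hh.div_const _) <| iInf_le _ fun x => ?_
    rw [abs_div, abs_of_pos hK, div_le_iff₀ hK]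
    nlinarith [hb x, le_abs_self K, hψ0 x]
  convert hscaled.const_mul (|K| + 1) using 2 with ν
  rw [integral_div, mul_div_cancel₀ _ hK.ne']

theorem Pw.continuous_toProb [OpensMeasurableSpace E] (hψ0 : ∀ x, 0 ≤ ψ x) :
    Continuous (Pw.toProb : Pw E ψ → ProbabilityMeasure E) := by
  refine continuous_iff_continuousAt.2 fun ν => ?_
  refine ProbabilityMeasure.tendsto_iff_forall_integral_tendsto.2 fun h => ?_
  refine ((Pw.continuous_integral hψ0 h.continuous (K := ‖h‖) fun x => ?_).tendsto ν)
  nlinarith [h.norm_coe_le_norm x, norm_nonneg h, hψ0 x, Real.norm_eq_abs (h x)]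

theorem Pw.upperSemicontinuous_integral [TopologicalSpace.PseudoMetrizableSpace E] [Nonempty E]
    [OpensMeasurableSpace E] (hψc : Continuous ψ) (hψ0 : ∀ x, 0 ≤ ψ x) {g : E → ℝ}
    (hg : UpperSemicontinuous g) {a K : ℝ} (ha : ∀ x, a ≤ g x)
    (hK : ∀ x, g x ≤ K * (1 + ψ x)) :
    UpperSemicontinuous fun ν : Pw E ψ => ∫ x, g x ∂(ν.toProb : Measure E) := by
  have hKψ : Continuous fun x => K * (1 + ψ x) := continuous_const.mul (continuous_const.add hψc)
  obtain ⟨h, hcont, hgh, hh0, hlim⟩ :=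
    UpperSemicontinuous.exists_seq_continuous_tendsto
      (g := fun x => g x - K * (1 + ψ x)) (hg.add hKψ.neg.upperSemicontinuous) (R := 0)
      fun x => by simp [hK x]
  set H : ℕ → E → ℝ := fun n x => h n x + K * (1 + ψ x)
  have hgH : ∀ n x, g x ≤ H n x := fun n x => by linarith [hgh n x]
  have hHK : ∀ n x, H n x ≤ K * (1 + ψ x) := fun n x => by linarith [hh0 n x]
  have hHabs : ∀ n x, |H n x| ≤ (|a| + |K|) * (1 + ψ x) := fun n x =>
    abs_le_mul_one_add_of_le_of_le (hψ0 x) ((ha x).trans (hgH n x)) (hHK n x)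
  have hHcont : ∀ n, Continuous (H n) := fun n => (hcont n).add hKψ
  intro ν₀ y hy
  have hψν₀ := Pw.integrable_psi hψc hψ0 ν₀
  have hconv : Tendsto (fun n => ∫ x, H n x ∂(ν₀.toProb : Measure E)) atTop
      (𝓝 (∫ x, g x ∂(ν₀.toProb : Measure E))) := by
    refine tendsto_integral_of_dominated_convergence (fun x => (|a| + |K|) * (1 + ψ x))
      (fun n => (hHcont n).aestronglyMeasurable)
      (((integrable_const 1).add hψν₀).const_mul _) (fun n => ae_of_all _ (hHabs n))
      (ae_of_all _ fun x => ?_)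
    simpa [H] using (hlim x).add_const (K * (1 + ψ x))
  obtain ⟨n, hn⟩ := (hconv.eventually (gt_mem_nhds hy)).exists
  filter_upwards [((Pw.continuous_integral hψ0 (hHcont n) (hHabs n)).tendsto ν₀).eventually
    (gt_mem_nhds hn)] with ν hν
  have hψν := Pw.integrable_psi hψc hψ0 ν
  refine lt_of_le_of_lt (integral_mono ?_ ?_ (hgH n)) hν
  · exact integrable_of_le_of_le_mul_one_add hψν hg.measurable.aestronglyMeasurable ha hK
  · exact integrable_of_le_of_le_mul_one_add hψν (hHcont n).aestronglyMeasurable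
      (fun x => (ha x).trans (hgH n x)) (hHK n)

theorem Pw.exists_forall_integral_max_sub_lt_of_isCompact [OpensMeasurableSpace E]
    (hψc : Continuous ψ) (hψ0 : ∀ x, 0 ≤ ψ x) {K : Set (Pw E ψ)} (hK : IsCompact K) {ε : ℝ}
    (hε : 0 < ε) :
    ∃ R : ℕ, ∀ ν ∈ K, ∫ x, max (ψ x - R) 0 ∂(ν.toProb : Measure E) < ε := by
  set u : ℕ → Pw E ψ → ℝ := fun R ν => ∫ x, max (ψ x - R) 0 ∂(ν.toProb : Measure E)
  have hle : ∀ (R : ℕ) x, max (ψ x - R) 0 ≤ 1 * (1 + ψ x) := fun R x =>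
    max_le (by linarith [(Nat.cast_nonneg R : (0 : ℝ) ≤ R)]) (by linarith [hψ0 x])
  have hcont : ∀ R : ℕ, Continuous (u R) := fun R =>
    Pw.continuous_integral hψ0 ((hψc.sub continuous_const).max continuous_const) (K := 1)
      fun x => by rw [abs_of_nonneg (le_max_right _ _)]; exact hle R x
  have hint : ∀ (R : ℕ) (ν : Pw E ψ),
      Integrable (fun x => max (ψ x - R) 0) (ν.toProb : Measure E) := fun R ν =>
    ((Pw.integrable_psi hψc hψ0 ν).sub (integrable_const _)).pos_part
  have hanti : ∀ ν, Antitone fun R => u R ν := fun ν R R' hRR' =>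
    integral_mono (hint R' ν) (hint R ν) fun x =>
      max_le_max (sub_le_sub_left (Nat.cast_le.2 hRR') _) le_rfl
  have hlim : ∀ ν, Tendsto (fun R => u R ν) atTop (𝓝 0) := fun ν => by
    simpa using tendsto_integral_of_dominated_convergence ψ (fun R => (hint R ν).1)
      (Pw.integrable_psi hψc hψ0 ν)
      (fun R => ae_of_all _ fun x => by simp [abs_of_nonneg, hψ0 x])
      (ae_of_all _ fun x => tendsto_atTop_of_eventually_const (i₀ := ⌈ψ x⌉₊) fun R hR =>
        max_eq_right (sub_nonpos.2 ((Nat.le_ceil _).trans (Nat.cast_le.2 hR))))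
  refine hK.elim_directed_cover (fun R => {ν | u R ν < ε}) (fun R => isOpen_lt (hcont R)
    continuous_const) (fun ν _ => mem_iUnion.2 ((hlim ν).eventually (gt_mem_nhds hε)).exists)
    (Monotone.directed_le fun R R' hRR' ν hν => (hanti ν hRR').trans_lt hν)

end PwTopology

section Mixture

variable {E : Type*} [MeasurableSpace E]

def mixture (μ₁ μ₂ : ProbabilityMeasure E) (t : ℝ≥0) (ht : t ≤ 1) : ProbabilityMeasure E :=
  ⟨(t : ℝ≥0∞) • (μ₁ : Measure E) + ((1 - t : ℝ≥0) : ℝ≥0∞) • (μ₂ : Measure E),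
    ⟨by simpa using add_tsub_cancel_of_le (ENNReal.coe_le_one_iff.2 ht)⟩⟩

theorem alpha_mixture_le {α : ProbabilityMeasure E → EReal}
    (hconvex : ∀ (μ₁ μ₂ : ProbabilityMeasure E) (t : ℝ≥0), t ≤ 1 →
      extend α ((t : ℝ≥0∞) • (μ₁ : Measure E) + ((1 - t : ℝ≥0) : ℝ≥0∞) • (μ₂ : Measure E))
        ≤ ((t : ℝ) : EReal) * α μ₁ + (((1 - t : ℝ≥0) : ℝ) : EReal) * α μ₂)
    {μ₁ μ₂ : ProbabilityMeasure E} {a₁ a₂ : ℝ} (h₁ : α μ₁ = a₁) (h₂ : α μ₂ = a₂) {t : ℝ≥0}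
    (ht : t ≤ 1) : α (mixture μ₁ μ₂ t ht) ≤ ((t * a₁ + (1 - t) * a₂ : ℝ) : EReal) := by
  have h := hconvex μ₁ μ₂ t ht
  rwa [show extend α ((t : ℝ≥0∞) • (μ₁ : Measure E) + ((1 - t : ℝ≥0) : ℝ≥0∞) • (μ₂ : Measure E))
      = α (mixture μ₁ μ₂ t ht) from dif_pos (mixture μ₁ μ₂ t ht).2, h₁, h₂,
    ← EReal.coe_mul, ← EReal.coe_mul, ← EReal.coe_add, NNReal.coe_sub ht, NNReal.coe_one] at h

theorem integral_mixture {μ₁ μ₂ : ProbabilityMeasure E} {t : ℝ≥0} (ht : t ≤ 1) {F : E → ℝ}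
    (h₁ : Integrable F (μ₁ : Measure E)) (h₂ : Integrable F (μ₂ : Measure E)) :
    ∫ x, F x ∂(mixture μ₁ μ₂ t ht : Measure E) =
      t * ∫ x, F x ∂(μ₁ : Measure E) + (1 - t) * ∫ x, F x ∂(μ₂ : Measure E) := by
  simp only [mixture, ProbabilityMeasure.coe_mk]
  rw [integral_add_measure (h₁.smul_measure ENNReal.coe_ne_top)
    (h₂.smul_measure ENNReal.coe_ne_top), integral_smul_measure, integral_smul_measure]
  rw [ENNReal.coe_toReal, ENNReal.coe_toReal, NNReal.coe_sub ht, NNReal.coe_one, smul_eq_mul,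
    smul_eq_mul]

end Mixture

section Penalty

variable {E : Type*} [MeasurableSpace E] [TopologicalSpace E] [OpensMeasurableSpace E]
  {α : ProbabilityMeasure E → EReal} {ψ : E → ℝ}

/-- Mixing a measure with large `∫ ψ` into a fixed one with weight `1 / ∫ ψ` keeps `α` bounded
by convexity, but leaves a tail `∫ (ψ - R)⁺ ≥ 1/2`; this is incompatible with the uniform
integrability of `ψ` on the relatively compact sub-level sets of `α`. -/
theorem exists_forall_mul_integral_psi_sub_le
    (hconvex : ∀ (μ₁ μ₂ : ProbabilityMeasure E) (t : ℝ≥0), t ≤ 1 →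
      extend α ((t : ℝ≥0∞) • (μ₁ : Measure E) + ((1 - t : ℝ≥0) : ℝ≥0∞) • (μ₂ : Measure E))
        ≤ ((t : ℝ) : EReal) * α μ₁ + (((1 - t : ℝ≥0) : ℝ) : EReal) * α μ₂)
    (hψc : Continuous ψ) (hψ0 : ∀ x, 0 ≤ ψ x)
    (hpsi : ∀ c : ℝ, ∀ ν : ProbabilityMeasure E, α ν ≤ c →
      ∫⁻ x, ENNReal.ofReal (ψ x) ∂(ν : Measure E) ≠ ⊤)
    (hpw : ∀ c : ℝ, IsCompact (closure {ν : Pw E ψ | α ν.toProb ≤ c}))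
    {b : ℝ} (hb : ∀ ν, (b : EReal) ≤ α ν) (hproper : ∃ ν, α ν ≠ ⊤) {l : ℝ} (hl : 0 < l) :
    ∃ G : ℝ, ∀ (ν : ProbabilityMeasure E) (a : ℝ), α ν = a →
      l * ∫ x, ψ x ∂(ν : Measure E) - a ≤ G := by
  obtain ⟨ν₀, hν₀⟩ := hproper
  set a₀ := (α ν₀).toReal
  have ha₀ : α ν₀ = a₀ :=
    (EReal.coe_toReal hν₀ (ne_bot_of_le_ne_bot (EReal.coe_ne_bot b) (hb ν₀))).symm
  have hψint : ∀ ν (a : ℝ), α ν = a → Integrable ψ (ν : Measure E) := fun ν a ha =>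
    integrable_of_lintegral_ofReal_ne_top hψc.aestronglyMeasurable hψ0 (hpsi a ν ha.le)
  obtain ⟨R, hR⟩ :=
    Pw.exists_forall_integral_max_sub_lt_of_isCompact hψc hψ0 (hpw (l + |a₀|)) one_half_pos
  have htail_int : ∀ ν (a : ℝ), α ν = a →
      Integrable (fun x => max (ψ x - R) 0) (ν : Measure E) := fun ν a ha =>
    ((hψint ν a ha).sub (integrable_const _)).pos_part
  refine ⟨l * (2 * R + 1) + |b|, fun ν₁ a₁ ha₁ => not_lt.1 fun hlt => ?_⟩
  set x₁ := ∫ x, ψ x ∂(ν₁ : Measure E)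
  have hba₁ : b ≤ a₁ := EReal.coe_le_coe_iff.1 (ha₁ ▸ hb ν₁)
  have hx₁ : 2 * R + 1 ≤ x₁ :=
    le_of_mul_le_mul_left (by linarith [neg_abs_le b]) hl
  have hx₁pos : 0 < x₁ := by linarith [(Nat.cast_nonneg R : (0 : ℝ) ≤ R)]
  set t : ℝ≥0 := ⟨x₁⁻¹, inv_nonneg.2 hx₁pos.le⟩
  have htx : (t : ℝ) * x₁ = 1 := inv_mul_cancel₀ hx₁pos.ne'
  have ht : t ≤ 1 := by
    rw [← NNReal.coe_le_coe]
    exact inv_le_one_of_one_le₀ (by linarith [(Nat.cast_nonneg R : (0 : ℝ) ≤ R)])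
  set P := mixture ν₁ ν₀ t ht
  have hαP : α P ≤ ((l + |a₀| : ℝ) : EReal) := by
    refine (alpha_mixture_le hconvex ha₁ ha₀ ht).trans (EReal.coe_le_coe_iff.2 ?_)
    have h1t : (t : ℝ) ≤ 1 := ht
    have h₁ : (t : ℝ) * a₁ ≤ l := by
      have hlx : (t : ℝ) * (l * x₁) = l := by rw [mul_left_comm, htx, mul_one]
      have hax : a₁ ≤ l * x₁ := by
        nlinarith [abs_nonneg b, mul_nonneg hl.le (by positivity : (0 : ℝ) ≤ 2 * R + 1)]
      nlinarith [mul_le_mul_of_nonneg_left hax t.2]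
    have h₀ : (1 - (t : ℝ)) * a₀ ≤ |a₀| := by
      nlinarith [mul_le_mul_of_nonneg_left (le_abs_self a₀) (sub_nonneg.2 h1t), abs_nonneg a₀]
    linarith
  let Q : Pw E ψ := ⟨P, hpsi _ P hαP⟩
  have htail : ∫ x, max (ψ x - R) 0 ∂(P : Measure E) < 1 / 2 := hR Q (subset_closure hαP)
  rw [integral_mixture ht (htail_int ν₁ a₁ ha₁) (htail_int ν₀ a₀ ha₀)] at htail
  have h₁ := sub_le_integral_max_sub_zero (hψint ν₁ a₁ ha₁) R
  have h₀ : 0 ≤ ∫ x, max (ψ x - R) 0 ∂(ν₀ : Measure E) :=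
    integral_nonneg fun x => le_max_right _ _
  have h1t : (t : ℝ) ≤ 1 := ht
  nlinarith [mul_le_mul_of_nonneg_left h₁ t.2, mul_nonneg (sub_nonneg.2 h1t) h₀,
    mul_le_mul_of_nonneg_left (show 2 * (R : ℝ) ≤ x₁ by linarith) t.2]

theorem exists_pw_alpha_le_of_lt_rhoE (hbot : ∀ ν, α ν ≠ ⊥) (hψc : Continuous ψ)
    (hψ0 : ∀ x, 0 ≤ ψ x)
    (hpsi : ∀ c : ℝ, ∀ ν : ProbabilityMeasure E, α ν ≤ c →
      ∫⁻ x, ENNReal.ofReal (ψ x) ∂(ν : Measure E) ≠ ⊤)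
    {c G : ℝ} (hc : 0 ≤ c) (hG : ∀ (ν : ProbabilityMeasure E) (a : ℝ), α ν = a →
      (c + 1) * ∫ x, ψ x ∂(ν : Measure E) - a ≤ G)
    {g : E → ℝ} (hg : Measurable g) {a : ℝ} (ha : ∀ x, a ≤ g x)
    (hgc : ∀ x, g x ≤ c * (1 + ψ x)) {r : ℝ} (hr : (r : EReal) < rhoE α fun x => (g x : EReal)) :
    ∃ ν : Pw E ψ, α ν.toProb ≤ ((∫ x, g x ∂(ν.toProb : Measure E) - r : ℝ) : EReal) ∧
      α ν.toProb ≤ ((c * (1 + G + c - r) - r : ℝ) : EReal) := by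
  obtain ⟨ν, hν⟩ := lt_iSup_iff.1 hr
  have hα_top : α ν ≠ ⊤ := fun h => by simp [h] at hν
  set s := (α ν).toReal
  have hs : α ν = s := (EReal.coe_toReal hα_top (hbot ν)).symm
  have hψν : Integrable ψ (ν : Measure E) :=
    integrable_of_lintegral_ofReal_ne_top hψc.aestronglyMeasurable hψ0 (hpsi s ν hs.le)
  have hgν : Integrable g (ν : Measure E) :=
    integrable_of_le_of_le_mul_one_add hψν hg.aestronglyMeasurable ha hgc
  rw [erealIntegral_coe_of_integrable hgν, hs, ← EReal.coe_sub, EReal.coe_lt_coe_iff] at hν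
  have hgψ : ∫ x, g x ∂(ν : Measure E) ≤ c * (1 + ∫ x, ψ x ∂(ν : Measure E)) := by
    calc ∫ x, g x ∂(ν : Measure E) ≤ ∫ x, c * (1 + ψ x) ∂(ν : Measure E) :=
          integral_mono hgν (((integrable_const 1).add hψν).const_mul c) hgc
      _ = c * (1 + ∫ x, ψ x ∂(ν : Measure E)) := by
          rw [integral_const_mul, integral_add (integrable_const 1) hψν]; simp
  have hGν := hG ν s hs
  refine ⟨⟨ν, hpsi s ν hs.le⟩, ?_, ?_⟩ <;> simp only [Pw.toProb, hs, EReal.coe_le_coe_iff]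
  · linarith
  · nlinarith

end Penalty

theorem rhoE_coe_mono {E : Type*} [MeasurableSpace E] (α : ProbabilityMeasure E → EReal)
    {g₁ g₂ : E → ℝ} (h : ∀ x, g₁ x ≤ g₂ x) :
    rhoE α (fun x => (g₁ x : EReal)) ≤ rhoE α (fun x => (g₂ x : EReal)) :=
  iSup_mono fun _ => EReal.sub_le_sub (erealIntegral_coe_mono h) le_rfl

theorem coe_le_rhoE_of_forall_le_integral_sub {E : Type*} [MeasurableSpace E]
    {α : ProbabilityMeasure E → EReal} {ν : ProbabilityMeasure E} (hbot : α ν ≠ ⊥)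
    {g : ℕ → E → ℝ} {f : E → ℝ} (hg : ∀ n, Integrable (g n) (ν : Measure E))
    (hanti : ∀ x, Antitone fun n => g n x) (hlim : ∀ x, Tendsto (fun n => g n x) atTop (𝓝 (f x)))
    {r : ℝ} (hν : ∀ n, α ν ≤ ((∫ x, g n x ∂(ν : Measure E) - r : ℝ) : EReal)) :
    (r : EReal) ≤ rhoE α fun x => (f x : EReal) := by
  have hα_top : α ν ≠ ⊤ := ne_top_of_le_ne_top (EReal.coe_ne_top _) (hν 0)
  set s := (α ν).toReal
  have hs : α ν = s := (EReal.coe_toReal hα_top hbot).symm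
  obtain ⟨hf, hf_ge⟩ := integrable_and_le_integral_of_antitone_of_tendsto hg hanti hlim
    (C := s + r) fun n => by
      have := hν n
      rw [hs, EReal.coe_le_coe_iff] at this
      linarith
  refine le_iSup_of_le ν ?_
  rw [erealIntegral_coe_of_integrable hf, hs, ← EReal.coe_sub, EReal.coe_le_coe_iff]
  linarith

theorem coe_le_rhoE_of_forall_lt_rhoE_max {E : Type*} [MeasurableSpace E] [TopologicalSpace E]
    [PolishSpace E] [BorelSpace E] [Nonempty E] {α : ProbabilityMeasure E → EReal} {ψ : E → ℝ}
    (hbot : ∀ ν, α ν ≠ ⊥) (hproper : ∃ ν, α ν ≠ ⊤)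
    (hconvex : ∀ (μ₁ μ₂ : ProbabilityMeasure E) (t : ℝ≥0), t ≤ 1 →
      extend α ((t : ℝ≥0∞) • (μ₁ : Measure E) + ((1 - t : ℝ≥0) : ℝ≥0∞) • (μ₂ : Measure E))
        ≤ ((t : ℝ) : EReal) * α μ₁ + (((1 - t : ℝ≥0) : ℝ) : EReal) * α μ₂)
    (hcompact : ∀ c : ℝ, IsCompact {ν : ProbabilityMeasure E | α ν ≤ (c : EReal)})
    (hψc : Continuous ψ) (hψ0 : ∀ x, 0 ≤ ψ x)
    (hpsi : ∀ c : ℝ, ∀ ν : ProbabilityMeasure E, α ν ≤ c →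
      ∫⁻ x, ENNReal.ofReal (ψ x) ∂(ν : Measure E) ≠ ⊤)
    (hpw : ∀ c : ℝ, IsCompact (closure {ν : Pw E ψ | α ν.toProb ≤ c}))
    {f : E → ℝ} (hf : UpperSemicontinuous f) {c : ℝ} (hc : 0 ≤ c)
    (hfc : ∀ x, f x ≤ c * (1 + ψ x)) {r : ℝ}
    (hr : ∀ m : ℝ, 0 < m → (r : EReal) < rhoE α fun x => ((max (f x) (-m) : ℝ) : EReal)) :
    (r : EReal) ≤ rhoE α fun x => (f x : EReal) := by
  set g : ℕ → E → ℝ := fun n x => max (f x) (-(n + 1))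
  have hg_usc : ∀ n, UpperSemicontinuous (g n) := fun n => hf.sup upperSemicontinuous_const
  have hg_lo : ∀ (n : ℕ) x, -((n : ℝ) + 1) ≤ g n x := fun n x => le_max_right _ _
  have hg_up : ∀ n x, g n x ≤ c * (1 + ψ x) := fun n x =>
    max_le (hfc x) (by nlinarith [hψ0 x, (Nat.cast_nonneg n : (0 : ℝ) ≤ n)])
  have hg_int : ∀ n (ν : Pw E ψ), Integrable (g n) (ν.toProb : Measure E) := fun n ν =>
    integrable_of_le_of_le_mul_one_add (Pw.integrable_psi hψc hψ0 ν)
      (hg_usc n).measurable.aestronglyMeasurable (hg_lo n) (hg_up n)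
  have hg_anti : ∀ x, Antitone fun n => g n x := fun x m n hmn =>
    max_le_max le_rfl (by gcongr)
  have hg_lim : ∀ x, Tendsto (fun n => g n x) atTop (𝓝 (f x)) := fun x =>
    tendsto_atTop_of_eventually_const (i₀ := ⌈-f x⌉₊) fun n hn =>
      max_eq_left (by linarith [(Nat.le_ceil (-f x)).trans (Nat.cast_le.2 hn)])
  have hα_lsc : LowerSemicontinuous α :=
    lowerSemicontinuous_of_isClosed_sublevel fun c => (hcompact c).isClosed
  obtain ⟨b, hb⟩ := exists_coe_le_of_lowerSemicontinuous hα_lsc hbot hcompact hproper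
  obtain ⟨G, hG⟩ :=
    exists_forall_mul_integral_psi_sub_le hconvex hψc hψ0 hpsi hpw hb hproper (l := c + 1)
      (by linarith)
  set M := c * (1 + G + c - r) - r
  set S : ℕ → Set (Pw E ψ) := fun n =>
    {ν | α ν.toProb ≤ ((∫ x, g n x ∂(ν.toProb : Measure E) - r : ℝ) : EReal)} ∩
      closure {ν | α ν.toProb ≤ M}
  have hS_closed : ∀ n, IsClosed (S n) := fun n => by
    refine (isClosed_setOf_le_of_lowerSemicontinuous_of_upperSemicontinuous
      (hα_lsc.comp (Pw.continuous_toProb hψ0)) ?_).inter isClosed_closure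
    simpa only [sub_eq_add_neg] using (Pw.upperSemicontinuous_integral hψc hψ0 (hg_usc n)
      (hg_lo n) (hg_up n)).add (upperSemicontinuous_const (z := -r))
  have hS_anti : ∀ n, S (n + 1) ⊆ S n := fun n ν hν =>
    ⟨hν.1.trans (EReal.coe_le_coe_iff.2 (sub_le_sub_right (integral_mono (hg_int _ ν)
      (hg_int _ ν) fun x => hg_anti x n.le_succ) r)), hν.2⟩
  have hS_ne : ∀ n, (S n).Nonempty := fun n => by
    obtain ⟨ν, h₁, h₂⟩ := exists_pw_alpha_le_of_lt_rhoE hbot hψc hψ0 hpsi hc hG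
      (hg_usc n).measurable (hg_lo n) (hg_up n) (hr ((n : ℝ) + 1) (by positivity))
    exact ⟨ν, h₁, subset_closure h₂⟩
  obtain ⟨ν, hν⟩ := IsCompact.nonempty_iInter_of_sequence_nonempty_isCompact_isClosed S hS_anti
    hS_ne ((hpw M).of_isClosed_subset (hS_closed 0) inter_subset_right) hS_closed
  have hνS : ∀ n, α ν.toProb ≤ ((∫ x, g n x ∂(ν.toProb : Measure E) - r : ℝ) : EReal) :=
    fun n => (mem_iInter.1 hν n).1
  exact coe_le_rhoE_of_forall_le_integral_sub (hbot _) (hg_int · ν) hg_anti hg_lim hνS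

/-- **Lemma 2.13** (truncation from below): for `f` upper semicontinuous with `f ≤ c(1 + ψ)`,
`ρ(f) = lim_m ρ(f ∨ (−m)) = inf_{m>0} ρ(f ∨ (−m))`. -/
theorem extended_duality_below
    {E : Type*} [MeasurableSpace E] [TopologicalSpace E] [PolishSpace E] [BorelSpace E]
    [Nonempty E]
    (α : ProbabilityMeasure E → EReal)
    (hproper : ∃ ν, α ν ≠ ⊤) (hbot : ∀ ν, α ν ≠ ⊥)
    (hconvex : ∀ (μ₁ μ₂ : ProbabilityMeasure E) (t : ℝ≥0), t ≤ 1 →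
      extend α ((t : ℝ≥0∞) • (μ₁ : Measure E) + ((1 - t : ℝ≥0) : ℝ≥0∞) • (μ₂ : Measure E))
        ≤ ((t : ℝ) : EReal) * α μ₁ + (((1 - t : ℝ≥0) : ℝ) : EReal) * α μ₂)
    (hcompact : ∀ c : ℝ, IsCompact {ν : ProbabilityMeasure E | α ν ≤ (c : EReal)})
    (ψ : E → ℝ) (hψc : Continuous ψ) (hψ0 : ∀ x, 0 ≤ ψ x)
    (hpre : (∀ c : ℝ, (∀ ν : ProbabilityMeasure E, α ν ≤ (c : EReal) →
          ∫⁻ x, ENNReal.ofReal (ψ x) ∂(ν : Measure E) ≠ ⊤) ∧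
        IsCompact (closure {ν : Pw E (ψ) | α ν.toProb ≤ (c : EReal)})))
    (f : E → ℝ) (hfusc : UpperSemicontinuous f)
    (c : ℝ) (hc : 0 ≤ c) (hfle : ∀ x, f x ≤ c * (1 + ψ x)) :
    Filter.Tendsto (fun m : ℝ => rhoE α fun x => ((max (f x) (-m) : ℝ) : EReal)) Filter.atTop
      (𝓝 (rhoE α fun x => ((f x : ℝ) : EReal))) ∧
    (rhoE α fun x => ((f x : ℝ) : EReal)) =
      ⨅ (m : ℝ) (_ : 0 < m), rhoE α fun x => ((max (f x) (-m) : ℝ) : EReal) := by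
  set ρ : ℝ → EReal := fun m => rhoE α fun x => ((max (f x) (-m) : ℝ) : EReal)
  have hanti : Antitone ρ := fun m m' hmm' =>
    rhoE_coe_mono α fun x => max_le_max le_rfl (neg_le_neg hmm')
  have hinf : (rhoE α fun x => ((f x : ℝ) : EReal)) = ⨅ m, ρ m := by
    refine le_antisymm (le_iInf fun m => rhoE_coe_mono α fun x => le_max_left _ _) ?_
    refine EReal.ge_of_forall_gt_iff_ge.1 fun r hr => coe_le_rhoE_of_forall_lt_rhoE_max hbot hproper
      hconvex hcompact hψc hψ0 (fun c => (hpre c).1) (fun c => (hpre c).2) hfusc hc hfle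
      fun m _ => hr.trans_le (iInf_le ρ m)
  refine ⟨hinf ▸ tendsto_atTop_iInf hanti, hinf.trans (le_antisymm ?_ ?_)⟩
  · exact le_iInf₂ fun m _ => iInf_le ρ m
  · exact le_iInf fun m => (iInf₂_le (max m 1) (by positivity)).trans (hanti (le_max_left m 1))

end SanovDual
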